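/- Let 1/2 < γ < 1 and a ∈ ℤ \ {0} be fixed and let ε > 0. Then for all sufficiently large N, Σ_{N < n ≤ 2N, n = ⌊m^{1/γ}⌋ for some m ∈ ℕ, n ≠ a} τ(n − a) ≪ N^{γ + ε}, where τ denotes the number-of-divisors function (applied to |n − a|). -/

import Mathlib

open Finset Real

lemma tau_bound (ε : ℝ) (hε : 0 < ε) :
    ∃ C : ℝ, 0 < C ∧ ∀ n : ℕ, n ≠ 0 → ((n.divisors.card : ℝ)) ≤ C * (n : ℝ) ^ ε := by
  set c : ℝ := ε * Real.log 2 with hcdef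
  have hc0 : 0 < c := mul_pos hε (Real.log_pos one_lt_two)
  set M : ℝ := max 1 (2 / c) with hMdef
  have hM1 : (1 : ℝ) ≤ M := le_max_left _ _
  set B : ℕ := ⌈(2:ℝ) ^ (1/ε)⌉₊ with hBdef
  refine ⟨M ^ B, by positivity, ?_⟩
  intro n hn
  have h1 : ((n.divisors.card : ℝ)) =
      ∏ p ∈ n.primeFactors, ((n.factorization p + 1 : ℕ) : ℝ) := by
    rw [Nat.card_divisors hn]
    push_cast
    rfl
  have hn' : (n : ℝ) = ∏ p ∈ n.primeFactors, ((p : ℝ) ^ (n.factorization p)) := by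
    conv_lhs => rw [← Nat.factorization_prod_pow_eq_self hn]
    rw [Finsupp.prod]
    push_cast
    rfl
  have h2 : (n : ℝ) ^ ε =
      ∏ p ∈ n.primeFactors, ((p : ℝ) ^ (n.factorization p)) ^ ε := by
    rw [hn', ← Real.finset_prod_rpow _ _ (fun p _ => by positivity)]
  have key : ∀ p ∈ n.primeFactors,
      ((n.factorization p + 1 : ℕ) : ℝ) ≤
        (if (p:ℝ) < (2:ℝ) ^ (1/ε) then M else 1) * ((p : ℝ) ^ (n.factorization p)) ^ ε := by
    intro p hp
    obtain ⟨hpp, hpd, -⟩ := Nat.mem_primeFactors.mp hp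
    set k : ℕ := n.factorization p with hkdef
    have hk1 : 1 ≤ k := (Nat.Prime.factorization_pos_of_dvd hpp hn hpd)
    have hp2 : (2:ℝ) ≤ (p:ℝ) := by exact_mod_cast hpp.two_le
    have hx : ((p : ℝ) ^ k) ^ ε = (p:ℝ) ^ ((k:ℝ) * ε) := by
      rw [← Real.rpow_natCast (p:ℝ) k, ← Real.rpow_mul (by positivity)]
    split_ifs with hsmall
    · -- small prime: k+1 ≤ M * p^(kε)
      have h2k : (2:ℝ) ^ ((k:ℝ) * ε) ≤ (p:ℝ) ^ ((k:ℝ) * ε) :=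
        Real.rpow_le_rpow (by norm_num) hp2 (by positivity)
      have hexp : (2:ℝ) ^ ((k:ℝ) * ε) = Real.exp ((k:ℝ) * c) := by
        rw [Real.rpow_def_of_pos (by norm_num : (0:ℝ) < 2), hcdef]
        ring_nf
      have hkc : (k:ℝ) * c + 1 ≤ Real.exp ((k:ℝ) * c) := Real.add_one_le_exp _
      have hMx : (2 / c) * ((k:ℝ) * c + 1) ≤ M * ((p : ℝ) ^ k) ^ ε := by
        rw [hx]
        have h1' : (2 / c) * ((k:ℝ) * c + 1) ≤ (2/c) * ((p:ℝ) ^ ((k:ℝ)*ε)) := by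
          apply mul_le_mul_of_nonneg_left _ (by positivity)
          calc (k:ℝ) * c + 1 ≤ Real.exp ((k:ℝ) * c) := hkc
            _ = (2:ℝ) ^ ((k:ℝ) * ε) := hexp.symm
            _ ≤ _ := h2k
        calc (2 / c) * ((k:ℝ) * c + 1) ≤ (2/c) * ((p:ℝ) ^ ((k:ℝ)*ε)) := h1'
          _ ≤ M * ((p:ℝ) ^ ((k:ℝ)*ε)) :=
            mul_le_mul_of_nonneg_right (le_max_right _ _) (by positivity)
      refine le_trans ?_ hMx
      have : (2 / c) * ((k:ℝ) * c + 1) = 2 * (k:ℝ) + 2 / c := by field_simp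
      rw [this]
      push_cast
      have : (1:ℝ) ≤ (k:ℝ) := by exact_mod_cast hk1
      nlinarith [hc0, div_pos (by norm_num : (0:ℝ) < 2) hc0]
    · -- large prime: p^ε ≥ 2, so p^(kε) ≥ 2^k ≥ k+1
      push_neg at hsmall
      have hpe : (2:ℝ) ≤ (p:ℝ) ^ ε := by
        have := Real.rpow_le_rpow (by positivity) hsmall (le_of_lt hε)
        rwa [← Real.rpow_mul (by norm_num : (0:ℝ) ≤ 2), one_div_mul_cancel (ne_of_gt hε),
          Real.rpow_one] at this
      have hxx : ((p : ℝ) ^ k) ^ ε = ((p:ℝ) ^ ε) ^ k := by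
        rw [hx, ← Real.rpow_natCast ((p:ℝ)^ε) k, ← Real.rpow_mul (by positivity)]
        ring_nf
      rw [hxx, one_mul]
      calc ((k + 1 : ℕ) : ℝ) ≤ (2:ℝ) ^ k := by
            exact_mod_cast (Nat.lt_two_pow_self (n := k))
        _ ≤ ((p:ℝ) ^ ε) ^ k := pow_le_pow_left₀ (by norm_num) hpe k
  calc ((n.divisors.card : ℝ))
      = ∏ p ∈ n.primeFactors, ((n.factorization p + 1 : ℕ) : ℝ) := h1
    _ ≤ ∏ p ∈ n.primeFactors,
        (if (p:ℝ) < (2:ℝ) ^ (1/ε) then M else 1) * ((p : ℝ) ^ (n.factorization p)) ^ ε := by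
        apply Finset.prod_le_prod (fun p _ => by positivity) key
    _ = (∏ p ∈ n.primeFactors, (if (p:ℝ) < (2:ℝ) ^ (1/ε) then M else 1)) * (n:ℝ) ^ ε := by
        rw [h2, Finset.prod_mul_distrib]
    _ ≤ M ^ B * (n : ℝ) ^ ε := by
        apply mul_le_mul_of_nonneg_right _ (by positivity)
        rw [← Finset.prod_filter, Finset.prod_const]
        apply pow_le_pow_right₀ hM1
        calc (n.primeFactors.filter (fun p : ℕ => ((p:ℝ) < (2:ℝ) ^ (1/ε)))).card
            ≤ (Finset.range B).card := by
              apply Finset.card_le_card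
              intro p hp
              obtain ⟨-, hps⟩ := Finset.mem_filter.mp hp
              rw [Finset.mem_range]
              have : (p:ℝ) < (B:ℝ) := lt_of_lt_of_le hps (Nat.le_ceil _)
              exact_mod_cast this
          _ = B := Finset.card_range B

open scoped Classical in
/-- For `1/2 < γ < 1` and a fixed nonzero integer `a`, the sum of `τ(|n - a|)` over
Piatetski-Shapiro numbers `n ∼ N` of type `γ` (with `n ≠ a`) is `≪ N^{γ+ε}`. -/
theorem divisor_sum_over_PS (γ : ℝ) (hγ₁ : 1 / 2 < γ) (hγ₂ : γ < 1)
    (a : ℤ) (ha : a ≠ 0) (ε : ℝ) (hε : 0 < ε) :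
    ∃ C : ℝ, 0 < C ∧ ∃ N₀ : ℝ, ∀ N : ℝ, N₀ ≤ N →
      ∑ n ∈ (Finset.Ioc ⌊N⌋₊ ⌊2 * N⌋₊).filter
          (fun n => (∃ m : ℕ, n = ⌊(m : ℝ) ^ (1 / γ)⌋₊) ∧ (n : ℤ) ≠ a),
        ((((n : ℤ) - a).natAbs.divisors.card : ℝ))
      ≤ C * N ^ (γ + ε) := by
  have hγ0 : 0 < γ := lt_trans (by norm_num) hγ₁
  obtain ⟨Cτ, hCτ0, hCτ⟩ := tau_bound ε hε
  refine ⟨4 * Cτ * 3 ^ ε, by positivity, (a.natAbs : ℝ) + 1, ?_⟩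
  intro N hN
  have hN1 : (1 : ℝ) ≤ N := by
    have : (0:ℝ) ≤ (a.natAbs : ℝ) := Nat.cast_nonneg _
    linarith
  have hN0 : (0 : ℝ) < N := lt_of_lt_of_le one_pos hN1
  set S := (Finset.Ioc ⌊N⌋₊ ⌊2 * N⌋₊).filter
      (fun n => (∃ m : ℕ, n = ⌊(m : ℝ) ^ (1 / γ)⌋₊) ∧ (n : ℤ) ≠ a) with hS
  -- Counting: |S| ≤ (2N+1)^γ + 1
  have hcard : (S.card : ℝ) ≤ (2 * N + 1) ^ γ + 1 := by
    set M₀ : ℕ := ⌊(2 * N + 1) ^ γ⌋₊ + 1 with hM₀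
    have hle : S.card ≤ M₀ := by
      classical
      have := Finset.card_le_card_of_injOn
        (f := fun n : ℕ => if h : ∃ m : ℕ, n = ⌊(m : ℝ) ^ (1 / γ)⌋₊ then h.choose else 0)
        (s := S) (t := Finset.range M₀) ?_ ?_
      · simpa using this
      · intro n hn
        have hn1 := (Finset.mem_filter.mp hn).1
        have hn2 := (Finset.mem_filter.mp hn).2.1
        show (if h : ∃ m : ℕ, n = ⌊(m : ℝ) ^ (1 / γ)⌋₊ then h.choose else 0) ∈ Finset.range M₀
        rw [dif_pos hn2]
        set m := hn2.choose with hm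
        have hnm : n = ⌊(m : ℝ) ^ (1 / γ)⌋₊ := hn2.choose_spec
        have h1 : ((m : ℝ)) ^ (1 / γ) < 2 * N + 1 := by
          calc ((m : ℝ)) ^ (1 / γ) < ⌊(m : ℝ) ^ (1 / γ)⌋₊ + 1 := Nat.lt_floor_add_one _
            _ ≤ (⌊2 * N⌋₊ : ℝ) + 1 := by
                have : n ≤ ⌊2 * N⌋₊ := (Finset.mem_Ioc.mp hn1).2
                rw [← hnm]; push_cast; exact_mod_cast Nat.add_le_add_right this 1
            _ ≤ 2 * N + 1 := by
                have := Nat.floor_le (by positivity : (0:ℝ) ≤ 2 * N)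
                linarith
        have h2 : (m : ℝ) < (2 * N + 1) ^ γ := by
          have h3 := Real.rpow_lt_rpow (by positivity) h1 hγ0
          rwa [← Real.rpow_mul (by positivity : (0:ℝ) ≤ (m:ℝ)),
            one_div_mul_cancel (ne_of_gt hγ0), Real.rpow_one] at h3
        rw [Finset.mem_range, hM₀]
        exact Nat.lt_succ_of_le (Nat.le_floor h2.le)
      · intro n₁ h₁ n₂ h₂ he
        have hw₁ := (Finset.mem_filter.mp h₁).2.1
        have hw₂ := (Finset.mem_filter.mp h₂).2.1
        simp only [dif_pos hw₁, dif_pos hw₂] at he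
        rw [hw₁.choose_spec, hw₂.choose_spec, he]
    calc (S.card : ℝ) ≤ (M₀ : ℝ) := by exact_mod_cast hle
      _ = (⌊(2 * N + 1) ^ γ⌋₊ : ℝ) + 1 := by rw [hM₀]; push_cast; ring
      _ ≤ (2 * N + 1) ^ γ + 1 := by
          have := Nat.floor_le (by positivity : (0:ℝ) ≤ (2 * N + 1) ^ γ)
          linarith
  -- Term bound: each term ≤ Cτ * (3N)^ε
  have hterm : ∀ n ∈ S, ((((n : ℤ) - a).natAbs.divisors.card : ℝ)) ≤ Cτ * (3 * N) ^ ε := by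
    intro n hn
    have hn1 := (Finset.mem_filter.mp hn).1
    have hn3 := (Finset.mem_filter.mp hn).2.2
    have hne : ((n : ℤ) - a).natAbs ≠ 0 := by
      simp only [ne_eq, Int.natAbs_eq_zero, sub_eq_zero]
      exact hn3
    have habs : (((n : ℤ) - a).natAbs : ℝ) ≤ 3 * N := by
      have h1 : ((n : ℤ) - a).natAbs ≤ n + a.natAbs := by
        calc ((n : ℤ) - a).natAbs ≤ (n : ℤ).natAbs + a.natAbs := Int.natAbs_sub_le _ _
          _ = n + a.natAbs := by simp
      have h2 : (n : ℝ) ≤ 2 * N := by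
        have := (Finset.mem_Ioc.mp hn1).2
        calc (n : ℝ) ≤ (⌊2 * N⌋₊ : ℝ) := by exact_mod_cast this
          _ ≤ 2 * N := Nat.floor_le (by positivity)
      have h3 : ((a.natAbs : ℝ)) ≤ N := by linarith [hN]
      calc (((n : ℤ) - a).natAbs : ℝ) ≤ (n : ℝ) + (a.natAbs : ℝ) := by exact_mod_cast h1
        _ ≤ 3 * N := by linarith
    calc ((((n : ℤ) - a).natAbs.divisors.card : ℝ))
        ≤ Cτ * (((n : ℤ) - a).natAbs : ℝ) ^ ε := hCτ _ hne
      _ ≤ Cτ * (3 * N) ^ ε := by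
          apply mul_le_mul_of_nonneg_left _ (le_of_lt hCτ0)
          exact Real.rpow_le_rpow (by positivity) habs (le_of_lt hε)
  -- Combine
  calc ∑ n ∈ S, ((((n : ℤ) - a).natAbs.divisors.card : ℝ))
      ≤ ∑ _n ∈ S, Cτ * (3 * N) ^ ε := Finset.sum_le_sum hterm
    _ = (S.card : ℝ) * (Cτ * (3 * N) ^ ε) := by rw [Finset.sum_const, nsmul_eq_mul]
    _ ≤ ((2 * N + 1) ^ γ + 1) * (Cτ * (3 * N) ^ ε) := by
        apply mul_le_mul_of_nonneg_right hcard (by positivity)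
    _ ≤ (4 * N ^ γ) * (Cτ * (3 ^ ε * N ^ ε)) := by
        apply mul_le_mul
        · have h1 : (2 * N + 1) ^ γ ≤ (3 * N) ^ γ :=
            Real.rpow_le_rpow (by positivity) (by linarith) (le_of_lt hγ0)
          have h2 : (3 * N) ^ γ = 3 ^ γ * N ^ γ := Real.mul_rpow (by norm_num) (by positivity)
          have h3 : (3:ℝ) ^ γ ≤ 3 := by
            calc (3:ℝ) ^ γ ≤ 3 ^ (1:ℝ) :=
              Real.rpow_le_rpow_left_iff (by norm_num) |>.mpr (le_of_lt hγ₂)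
            _ = 3 := Real.rpow_one 3
          have h4 : (1:ℝ) ≤ N ^ γ := Real.one_le_rpow hN1 (le_of_lt hγ0)
          have h5 : (0:ℝ) ≤ N ^ γ := by positivity
          nlinarith
        · rw [Real.mul_rpow (by norm_num) (le_of_lt hN0)]
        · positivity
        · positivity
    _ = 4 * Cτ * 3 ^ ε * N ^ (γ + ε) := by
        rw [Real.rpow_add hN0]; ring
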